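/- Let p ∈ (1,∞] and let X denote either W^{1,p} or C^{0,1−1/p}. Suppose the delay system ẋ(t) = f(x_t) is forward complete on C⁰. Consider the properties: (UGAS) there exists σ ∈ KL with ‖φ(t,x₀)‖_∞ ≤ σ(‖x₀‖_∞, t) for all t ≥ 0 and x₀ ∈ C⁰; (Q-X) there exists σ ∈ KL with ‖φ(t,x₀)‖_∞ ≤ σ(‖x₀‖_X, t) for all t ≥ 0 and x₀ ∈ X; (UGAS-X) there exists σ ∈ KL with ‖φ(t,x₀)‖_X ≤ σ(‖x₀‖_X, t) for all t ≥ 0 and x₀ ∈ X. Then (UGAS) implies (Q-X), and (Q-X) holds if and only if (UGAS-X) holds. -/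

import Mathlib

open Set MeasureTheory Filter Topology
open scoped ENNReal NNReal

noncomputable section

abbrev Vec (n : ℕ) := EuclideanSpace ℝ (Fin n)

variable {n : ℕ}

/-- The segment `x_t` of a history `x : ℝ → ℝⁿ`, i.e. `x_t(s) = x(t+s)`
(only its values on `[-r,0]` are relevant). -/
def seg (r : ℝ) (x : ℝ → Vec n) (t : ℝ) : ℝ → Vec n := fun s => x (t + s)

/-- Sup norm over `[-r,0]`. -/
def supN (r : ℝ) (g : ℝ → Vec n) : ℝ := sSup ((fun s => ‖g s‖) '' Icc (-r) 0)

/-- Membership in `C⁰ = C([-r,0];ℝⁿ)`. -/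
def MemC0 (r : ℝ) (g : ℝ → Vec n) : Prop := ContinuousOn g (Icc (-r) 0)

/-- `f` vanishes at `0`, depends only on the values of its argument on `[-r,0]`,
and is Lipschitz on bounded subsets of `C⁰` with a nondecreasing (nonnegative)
modulus `L`. -/
def GoodRHS (r : ℝ) (f : (ℝ → Vec n) → Vec n) (L : ℝ → ℝ) : Prop :=
  f 0 = 0 ∧
  (∀ x y : ℝ → Vec n, EqOn x y (Icc (-r) 0) → f x = f y) ∧
  Monotone L ∧ (∀ s : ℝ, 0 ≤ L s) ∧
  ∀ R : ℝ, ∀ x y : ℝ → Vec n, MemC0 r x → MemC0 r y → supN r x ≤ R → supN r y ≤ R →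
    ‖f x - f y‖ ≤ L R * supN r (x - y)

/-- `x : ℝ → ℝⁿ` is a solution on `[-r, b)` (with `b ∈ (0,∞]` an extended
nonnegative real) of the delay system `ẋ(t) = f(x_t)` with initial condition `x0`:
it is continuous on `[-r,b)`, coincides with `x0` on `[-r,0]`, and satisfies the
integral equation `x(t) = x(0) + ∫₀ᵗ f(x_s) ds` on `[0,b)`. -/
def IsSol (r : ℝ) (f : (ℝ → Vec n) → Vec n) (x0 x : ℝ → Vec n) (b : ℝ≥0∞) : Prop :=
  ContinuousOn x {t : ℝ | -r ≤ t ∧ ENNReal.ofReal t < b} ∧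
  EqOn x x0 (Icc (-r) 0) ∧
  ∀ t : ℝ, 0 ≤ t → ENNReal.ofReal t < b → x t = x 0 + ∫ s in (0:ℝ)..t, f (seg r x s)

/-- Class `KL` functions `σ : [0,∞)×[0,∞) → [0,∞)`. -/
def ClassKL (σ : ℝ → ℝ → ℝ) : Prop :=
  (∀ s t : ℝ, 0 ≤ s → 0 ≤ t → 0 ≤ σ s t) ∧
  (∀ t : ℝ, 0 ≤ t →
    ContinuousOn (fun s => σ s t) (Ici 0) ∧ StrictMonoOn (fun s => σ s t) (Ici 0) ∧
      σ 0 t = 0) ∧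
  (∀ s : ℝ, 0 ≤ s →
    AntitoneOn (fun t => σ s t) (Ici 0) ∧ Tendsto (fun t => σ s t) atTop (nhds 0))

/-- Class `K∞` functions `a : [0,∞) → [0,∞)`. -/
def ClassKInf (a : ℝ → ℝ) : Prop :=
  (∀ s : ℝ, 0 ≤ s → 0 ≤ a s) ∧ ContinuousOn a (Ici 0) ∧ StrictMonoOn a (Ici 0) ∧
  a 0 = 0 ∧ Tendsto a atTop atTop

/-- The set of Hölder difference quotients `‖g t - g s‖ / |t-s|^α` over a set `S`. -/
def hRatios (α : ℝ) (S : Set ℝ) (g : ℝ → Vec n) : Set ℝ :=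
  {c | ∃ t ∈ S, ∃ s ∈ S, t ≠ s ∧ c = ‖g t - g s‖ / |t - s| ^ α}

/-- Membership in the Hölder space `C^{0,α}([-r,0])`. -/
def MemHol (r α : ℝ) (g : ℝ → Vec n) : Prop :=
  MemC0 r g ∧ BddAbove (hRatios α (Icc (-r) 0) g)

/-- The Hölder norm `max(‖g‖_∞, [g]_α)`. -/
def holderNorm (r α : ℝ) (g : ℝ → Vec n) : ℝ :=
  max (supN r g) (sSup (hRatios α (Icc (-r) 0) g))

/-- Membership in the Sobolev space `W^{1,p}([-r,0])`: `g` is absolutely continuous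
on `[-r,0]` (i.e. the integral of an integrable function `d`, which is then its a.e.
derivative) with `d ∈ L^p((-r,0))`. -/
def MemW (r : ℝ) (p : ℝ≥0∞) (g : ℝ → Vec n) : Prop :=
  ∃ d : ℝ → Vec n, IntegrableOn d (Icc (-r) 0) ∧
    eLpNorm d p (volume.restrict (Ioo (-r) 0)) < ⊤ ∧
    ∀ t ∈ Icc (-r) 0, g t = g (-r) + ∫ s in (-r)..t, d s

/-- The Sobolev norm `‖g‖_∞ + ‖ġ‖_p`; for an absolutely continuous `g` the a.e.
derivative coincides a.e. on `(-r,0)` with `deriv g`. -/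
def sobNorm (r : ℝ) (p : ℝ≥0∞) (g : ℝ → Vec n) : ℝ :=
  supN r g + (eLpNorm (deriv g) p (volume.restrict (Ioo (-r) 0))).toReal

/-- The Hölder exponent `1 - 1/p`, with the convention `1/∞ = 0`. -/
def hexp (p : ℝ≥0∞) : ℝ := 1 - (p.toReal)⁻¹


/-!
(UGAS) ⇒ (Q-X) and (UGAS-X) ⇒ (Q-X) are immediate from `‖·‖_∞ ≤ ‖·‖_X`. For (Q-X) ⇒ (UGAS-X)
put `c = ‖x₀‖_X`. Since `f 0 = 0`, the bound `‖x_s‖_∞ ≤ σ(c,s)` gives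
`|ẋ(u)| ≤ L(σ(c,0)) σ(c, max(t-r,0)) =: M` for `u ≥ max(t-r,0)`, so on the part of the window
`[t-r,t]` past time `0` the solution is `M`-Lipschitz, contributing at most `r^{1/p} M` to the
`W^{1,p}` or `C^{0,1-1/p}` seminorm; the part before time `0`, present only while `t < r`,
contributes at most `c`. Hence
`‖x_t‖_X ≤ σ(c,t) + r^{1/p} L(σ(c,0)) σ(c, max(t-r,0)) + c·1_{t<r}`, and the right-hand side
is dominated by a `KL` function once `L(σ(·,0))` is replaced by a continuous monotone majorant.
-/

lemma supN_nonneg (r : ℝ) (g : ℝ → Vec n) : 0 ≤ supN r g :=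
  Real.sSup_nonneg (by rintro _ ⟨s, _, rfl⟩; exact norm_nonneg _)

lemma supN_le {r M : ℝ} {g : ℝ → Vec n} (hM : 0 ≤ M) (h : ∀ s ∈ Icc (-r) 0, ‖g s‖ ≤ M) :
    supN r g ≤ M :=
  Real.sSup_le (by rintro _ ⟨s, hs, rfl⟩; exact h s hs) hM

lemma supN_zero (r : ℝ) : supN r (0 : ℝ → Vec n) = 0 :=
  le_antisymm (supN_le le_rfl (by simp)) (supN_nonneg r 0)

lemma MemW.memC0 {r : ℝ} {p : ℝ≥0∞} {g : ℝ → Vec n} (hg : MemW r p g) : MemC0 r g := by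
  obtain ⟨d, hd, -, hrep⟩ := hg
  rcases lt_or_ge 0 (-r) with hr | hr
  · simp [MemC0, Icc_eq_empty_of_lt hr]
  have hprim := intervalIntegral.continuousOn_primitive_interval (a := -r) (b := 0)
    (by rwa [uIcc_of_le hr])
  rw [uIcc_of_le hr] at hprim
  exact (continuousOn_const.add hprim).congr hrep

/-- By the Lebesgue differentiation theorem `deriv g` agrees a.e. with the density `d ∈ L^p`. -/
lemma MemW.eLpNorm_deriv_lt_top {r : ℝ} {p : ℝ≥0∞} {g : ℝ → Vec n} (hg : MemW r p g) :
    eLpNorm (deriv g) p (volume.restrict (Ioo (-r) 0)) < ⊤ := by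
  obtain ⟨d, hd, hdp, hrep⟩ := hg
  rcases lt_or_ge 0 (-r) with hr | hr
  · simp [Ioo_eq_empty_of_le hr.le]
  rw [← uIcc_of_le hr] at hd hrep
  refine lt_of_eq_of_lt (eLpNorm_congr_ae ?_) hdp
  filter_upwards [ae_restrict_of_ae hd.intervalIntegrable.ae_hasDerivAt_integral,
    ae_restrict_mem measurableSet_Ioo] with u hu huIoo
  have huIcc : u ∈ uIcc (-r) 0 := by rw [uIcc_of_le hr]; exact Ioo_subset_Icc_self huIoo
  refine ((hu huIcc (-r) left_mem_uIcc).const_add (g (-r))).congr_of_eventuallyEq ?_ |>.deriv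
  rw [uIcc_of_le hr] at hrep
  filter_upwards [Icc_mem_nhds huIoo.1 huIoo.2] with v hv using hrep v hv

lemma supN_le_sobNorm (r : ℝ) (p : ℝ≥0∞) (g : ℝ → Vec n) : supN r g ≤ sobNorm r p g :=
  le_add_of_nonneg_right ENNReal.toReal_nonneg

lemma norm_sub_le_holderNorm_mul {r α : ℝ} {g : ℝ → Vec n} (hg : MemHol r α g) {a b : ℝ}
    (ha : a ∈ Icc (-r) 0) (hb : b ∈ Icc (-r) 0) (hab : a ≠ b) :
    ‖g a - g b‖ ≤ holderNorm r α g * |a - b| ^ α := by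
  have hpos : 0 < |a - b| ^ α := Real.rpow_pos_of_pos (abs_pos.2 (sub_ne_zero.2 hab)) _
  rw [← div_le_iff₀ hpos]
  exact (le_csSup hg.2 ⟨a, ha, b, hb, hab, rfl⟩).trans (le_max_right _ _)

lemma holderNorm_le {r α M : ℝ} {g : ℝ → Vec n} (hM : 0 ≤ M)
    (hsup : supN r g ≤ M)
    (hrat : ∀ a ∈ Icc (-r) 0, ∀ b ∈ Icc (-r) 0, b < a → ‖g a - g b‖ ≤ M * (a - b) ^ α) :
    holderNorm r α g ≤ M := by
  refine max_le hsup (Real.sSup_le ?_ hM)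
  rintro _ ⟨a, ha, b, hb, hab, rfl⟩
  wlog hba : b < a generalizing a b
  · rw [norm_sub_rev, abs_sub_comm]
    exact this b hb a ha hab.symm (hab.lt_or_gt.resolve_right hba)
  rw [div_le_iff₀ (Real.rpow_pos_of_pos (abs_pos.2 (sub_ne_zero.2 hab)) _),
    abs_of_pos (sub_pos.2 hba)]
  exact hrat a ha b hb hba

lemma memC0_seg {r : ℝ} {x : ℝ → Vec n} (hx : ContinuousOn x (Ici (-r))) {t : ℝ} (ht : 0 ≤ t) :
    MemC0 r (seg r x t) :=
  hx.comp (by fun_prop) fun u hu => by simp only [mem_Ici]; linarith [hu.1]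

lemma exists_supN_seg_le {r : ℝ} {x : ℝ → Vec n} (hx : ContinuousOn x (Ici (-r))) (T : ℝ) :
    ∃ R, ∀ s ∈ Icc 0 T, supN r (seg r x s) ≤ R := by
  obtain ⟨C, hC⟩ := isCompact_Icc.exists_bound_of_continuousOn
    (hx.mono (Icc_subset_Ici_self : Icc (-r) T ⊆ _))
  refine ⟨max C 0, fun s hs => supN_le (le_max_right _ _) fun u hu => ?_⟩
  exact (hC _ ⟨by linarith [hs.1, hu.1], by linarith [hs.2, hu.2]⟩).trans (le_max_left _ _)

lemma tendsto_supN_seg_sub {r : ℝ} {x : ℝ → Vec n} (hx : ContinuousOn x (Ici (-r)))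
    {s₀ : ℝ} (hs₀ : 0 ≤ s₀) :
    Tendsto (fun s => supN r (seg r x s - seg r x s₀)) (𝓝[Ici 0] s₀) (𝓝 0) := by
  have hunif := isCompact_Icc.uniformContinuousOn_of_continuous
    (hx.mono (Icc_subset_Ici_self : Icc (-r) (s₀ + 1) ⊆ _))
  rw [Metric.tendsto_nhdsWithin_nhds]
  intro ε hε
  obtain ⟨δ, hδ, hδε⟩ := Metric.uniformContinuousOn_iff_le.1 hunif (ε / 2) (half_pos hε)
  refine ⟨min δ 1, lt_min hδ one_pos, fun {s} hs hds => ?_⟩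
  rw [Real.dist_eq, abs_lt, neg_lt, lt_min_iff, lt_min_iff] at hds
  have hmem : ∀ {s'}, 0 ≤ s' → s' ≤ s₀ + 1 → ∀ u ∈ Icc (-r) (0 : ℝ), s' + u ∈ Icc (-r) (s₀ + 1) :=
    fun hs' hs'' u hu => ⟨by linarith [hu.1], by linarith [hu.2]⟩
  have hle : supN r (seg r x s - seg r x s₀) ≤ ε / 2 := by
    refine supN_le (half_pos hε).le fun u hu => ?_
    rw [Pi.sub_apply, ← dist_eq_norm]
    refine hδε _ (hmem (mem_Ici.1 hs) (by linarith) u hu) _ (hmem hs₀ (by linarith) u hu) ?_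
    rw [Real.dist_eq, add_sub_add_right_eq_sub, abs_le]
    constructor <;> linarith
  rw [dist_zero_right, Real.norm_of_nonneg (supN_nonneg _ _)]
  linarith

section Solutions

variable {r : ℝ} {f : (ℝ → Vec n) → Vec n} {L : ℝ → ℝ}

lemma GoodRHS.monotone (hf : GoodRHS r f L) : Monotone L := hf.2.2.1

lemma GoodRHS.nonneg (hf : GoodRHS r f L) (s : ℝ) : 0 ≤ L s := hf.2.2.2.1 s

lemma GoodRHS.norm_le (hf : GoodRHS r f L) {g : ℝ → Vec n} (hg : MemC0 r g) {R : ℝ}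
    (hR : 0 ≤ R) (hgR : supN r g ≤ R) : ‖f g‖ ≤ L R * supN r g := by
  simpa [hf.1] using hf.2.2.2.2 R g 0 hg continuousOn_const hgR (by rwa [supN_zero])

lemma GoodRHS.continuousOn_comp_seg (hf : GoodRHS r f L) {x : ℝ → Vec n}
    (hx : ContinuousOn x (Ici (-r))) : ContinuousOn (fun s => f (seg r x s)) (Ici 0) := by
  intro s₀ hs₀
  obtain ⟨R, hR⟩ := exists_supN_seg_le hx (s₀ + 1)
  rw [ContinuousWithinAt, tendsto_iff_norm_sub_tendsto_zero]
  refine squeeze_zero' (Eventually.of_forall fun _ => norm_nonneg _) ?_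
    (by simpa using (tendsto_supN_seg_sub hx hs₀).const_mul (L R))
  filter_upwards [self_mem_nhdsWithin, mem_nhdsWithin_of_mem_nhds (gt_mem_nhds (lt_add_one s₀))]
    with s hs hs'
  exact hf.2.2.2.2 R _ _ (memC0_seg hx hs) (memC0_seg hx hs₀) (hR s ⟨hs, hs'.le⟩)
    (hR s₀ ⟨hs₀, by linarith⟩)

lemma IsSol.continuousOn {x0 x : ℝ → Vec n} (hsol : IsSol r f x0 x ⊤) :
    ContinuousOn x (Ici (-r)) := by
  simpa [IsSol, Ici] using hsol.1

lemma IsSol.eqOn {x0 x : ℝ → Vec n} (hsol : IsSol r f x0 x ⊤) : EqOn x x0 (Icc (-r) 0) :=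
  hsol.2.1

lemma IsSol.eq_integral {x0 x : ℝ → Vec n} (hsol : IsSol r f x0 x ⊤) {t : ℝ} (ht : 0 ≤ t) :
    x t = x 0 + ∫ s in (0 : ℝ)..t, f (seg r x s) :=
  hsol.2.2 t ht ENNReal.ofReal_lt_top

lemma IsSol.hasDerivAt (hf : GoodRHS r f L) {x0 x : ℝ → Vec n} (hsol : IsSol r f x0 x ⊤)
    {u : ℝ} (hu : 0 < u) : HasDerivAt x (f (seg r x u)) u := by
  have hcont := hf.continuousOn_comp_seg hsol.continuousOn
  have hint : IntervalIntegrable (fun s => f (seg r x s)) volume 0 u :=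
    (hcont.mono (by rw [uIcc_of_le hu.le]; exact Icc_subset_Ici_self)).intervalIntegrable
  refine ((intervalIntegral.integral_hasDerivAt_right hint
    ((hcont.mono Ioi_subset_Ici_self).stronglyMeasurableAtFilter isOpen_Ioi u hu)
    (hcont.continuousAt (Ici_mem_nhds hu))).const_add (x 0)).congr_of_eventuallyEq ?_
  filter_upwards [Ioi_mem_nhds hu] with t ht using hsol.eq_integral (le_of_lt ht)

lemma IsSol.norm_sub_le (hf : GoodRHS r f L) {x0 x : ℝ → Vec n} (hsol : IsSol r f x0 x ⊤)
    {a b M : ℝ} (ha : 0 ≤ a) (hab : a ≤ b) (hM : ∀ u ∈ Icc a b, ‖f (seg r x u)‖ ≤ M) :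
    ‖x b - x a‖ ≤ M * (b - a) := by
  have hint : ∀ c, 0 ≤ c → IntervalIntegrable (fun s => f (seg r x s)) volume 0 c :=
    fun c hc => ((hf.continuousOn_comp_seg hsol.continuousOn).mono
      (by rw [uIcc_of_le hc]; exact Icc_subset_Ici_self)).intervalIntegrable
  rw [hsol.eq_integral (ha.trans hab), hsol.eq_integral ha, add_sub_add_left_eq_sub,
    intervalIntegral.integral_interval_sub_left (hint b (ha.trans hab)) (hint a ha)]
  simpa [abs_of_nonneg (sub_nonneg.2 hab)] using
    intervalIntegral.norm_integral_le_of_norm_le_const fun u hu =>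
      hM u (Ioc_subset_Icc_self (uIoc_of_le hab ▸ hu))

end Solutions

lemma ClassKL.nonneg {σ : ℝ → ℝ → ℝ} (hσ : ClassKL σ) {s t : ℝ} (hs : 0 ≤ s) (ht : 0 ≤ t) :
    0 ≤ σ s t :=
  hσ.1 s t hs ht

lemma ClassKL.monotoneOn {σ : ℝ → ℝ → ℝ} (hσ : ClassKL σ) {t : ℝ} (ht : 0 ≤ t) :
    MonotoneOn (fun s => σ s t) (Ici 0) :=
  (hσ.2.1 t ht).2.1.monotoneOn

lemma ClassKL.antitoneOn {σ : ℝ → ℝ → ℝ} (hσ : ClassKL σ) {s : ℝ} (hs : 0 ≤ s) :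
    AntitoneOn (fun t => σ s t) (Ici 0) :=
  (hσ.2.2 s hs).1

structure IsWeakKL (τ : ℝ → ℝ → ℝ) : Prop where
  nonneg : ∀ s t, 0 ≤ s → 0 ≤ t → 0 ≤ τ s t
  continuousOn : ∀ t, 0 ≤ t → ContinuousOn (fun s => τ s t) (Ici 0)
  monotoneOn : ∀ t, 0 ≤ t → MonotoneOn (fun s => τ s t) (Ici 0)
  zero_left : ∀ t, 0 ≤ t → τ 0 t = 0
  antitoneOn : ∀ s, 0 ≤ s → AntitoneOn (fun t => τ s t) (Ici 0)
  tendsto : ∀ s, 0 ≤ s → Tendsto (fun t => τ s t) atTop (𝓝 0)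

lemma ClassKL.isWeakKL {σ : ℝ → ℝ → ℝ} (hσ : ClassKL σ) : IsWeakKL σ :=
  ⟨hσ.1, fun t ht => (hσ.2.1 t ht).1, fun _ ht => hσ.monotoneOn ht,
    fun t ht => (hσ.2.1 t ht).2.2, fun _ hs => hσ.antitoneOn hs, fun s hs => (hσ.2.2 s hs).2⟩

lemma ClassKL.add_isWeakKL {σ τ : ℝ → ℝ → ℝ} (hσ : ClassKL σ) (hτ : IsWeakKL τ) :
    ClassKL fun s t => σ s t + τ s t := by
  refine ⟨fun s t hs ht => add_nonneg (hσ.nonneg hs ht) (hτ.nonneg s t hs ht),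
    fun t ht => ⟨((hσ.2.1 t ht).1.add (hτ.continuousOn t ht)),
      fun a ha b hb hab => add_lt_add_of_lt_of_le ((hσ.2.1 t ht).2.1 ha hb hab)
        (hτ.monotoneOn t ht ha hb hab.le), by simp [(hσ.2.1 t ht).2.2, hτ.zero_left t ht]⟩,
    fun s hs => ⟨fun a ha b hb hab => add_le_add (hσ.antitoneOn hs ha hb hab)
      (hτ.antitoneOn s hs ha hb hab), by simpa using (hσ.2.2 s hs).2.add (hτ.tendsto s hs)⟩⟩

lemma IsWeakKL.add {τ τ' : ℝ → ℝ → ℝ} (hτ : IsWeakKL τ) (hτ' : IsWeakKL τ') :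
    IsWeakKL fun s t => τ s t + τ' s t where
  nonneg s t hs ht := add_nonneg (hτ.nonneg s t hs ht) (hτ'.nonneg s t hs ht)
  continuousOn t ht := (hτ.continuousOn t ht).add (hτ'.continuousOn t ht)
  monotoneOn t ht := (hτ.monotoneOn t ht).add (hτ'.monotoneOn t ht)
  zero_left t ht := by simp [hτ.zero_left t ht, hτ'.zero_left t ht]
  antitoneOn s hs := (hτ.antitoneOn s hs).add (hτ'.antitoneOn s hs)
  tendsto s hs := by simpa using (hτ.tendsto s hs).add (hτ'.tendsto s hs)

lemma IsWeakKL.mul_left {τ : ℝ → ℝ → ℝ} (hτ : IsWeakKL τ) {D : ℝ → ℝ}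
    (hDc : ContinuousOn D (Ici 0)) (hDm : MonotoneOn D (Ici 0)) (hD0 : ∀ s, 0 ≤ s → 0 ≤ D s) :
    IsWeakKL fun s t => D s * τ s t where
  nonneg s t hs ht := mul_nonneg (hD0 s hs) (hτ.nonneg s t hs ht)
  continuousOn t ht := hDc.mul (hτ.continuousOn t ht)
  monotoneOn t ht a ha b hb hab := mul_le_mul (hDm ha hb hab) (hτ.monotoneOn t ht ha hb hab)
    (hτ.nonneg a t ha ht) (hD0 b hb)
  zero_left t ht := by simp [hτ.zero_left t ht]
  antitoneOn s hs a ha b hb hab := mul_le_mul_of_nonneg_left (hτ.antitoneOn s hs ha hb hab)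
    (hD0 s hs)
  tendsto s hs := by simpa using (hτ.tendsto s hs).const_mul (D s)

lemma IsWeakKL.comp_delay {τ : ℝ → ℝ → ℝ} (hτ : IsWeakKL τ) (r : ℝ) :
    IsWeakKL fun s t => τ s (max (t - r) 0) where
  nonneg s _ hs _ := hτ.nonneg s _ hs (le_max_right _ _)
  continuousOn _ _ := hτ.continuousOn _ (le_max_right _ _)
  monotoneOn _ _ := hτ.monotoneOn _ (le_max_right _ _)
  zero_left _ _ := hτ.zero_left _ (le_max_right _ _)
  antitoneOn s hs _ _ _ _ hab := hτ.antitoneOn s hs (mem_Ici.2 (le_max_right _ _))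
    (mem_Ici.2 (le_max_right _ _)) (max_le_max (by linarith) le_rfl)
  tendsto s hs := (hτ.tendsto s hs).comp <| tendsto_atTop_mono (fun _ => le_max_left _ _)
    (tendsto_atTop_add_const_right atTop (-r) tendsto_id)

lemma isWeakKL_ite_lt (r : ℝ) : IsWeakKL fun s t => if t < r then s else 0 where
  nonneg s t hs _ := by split_ifs <;> simp [hs]
  continuousOn t _ := by split_ifs <;> fun_prop
  monotoneOn t _ a _ b _ hab := by split_ifs <;> simp [hab]
  zero_left t _ := by simp
  antitoneOn s hs a _ b _ hab := by
    dsimp only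
    split_ifs with hb ha <;> first | exact le_rfl | exact hs | exact absurd (hab.trans_lt hb) ha
  tendsto s _ := tendsto_const_nhds.congr' <| by
    filter_upwards [eventually_ge_atTop r] with t ht using by simp [not_lt.2 ht]

lemma Monotone.exists_continuous_monotone_ge {g : ℝ → ℝ} (hg : Monotone g) :
    ∃ D : ℝ → ℝ, Continuous D ∧ Monotone D ∧ ∀ c, g c ≤ D c := by
  have hint : ∀ a b : ℝ, IntervalIntegrable g volume a b := fun _ _ => hg.intervalIntegrable
  have hshift : ∀ c, ∫ u in c..c + 1, g u = ∫ u in (0 : ℝ)..1, g (u + c) := fun c => by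
    rw [intervalIntegral.integral_comp_add_right g c, zero_add, add_comm 1 c]
  refine ⟨fun c => ∫ u in c..c + 1, g u, ?_, fun a b hab => ?_, fun c => ?_⟩
  · have hprim := intervalIntegral.continuous_primitive hint 0
    refine ((hprim.comp (continuous_add_const 1)).sub hprim).congr fun c => ?_
    exact intervalIntegral.integral_interval_sub_left (hint 0 (c + 1)) (hint 0 c)
  · simp only [hshift]
    exact intervalIntegral.integral_mono_on zero_le_one
      (hg.comp (monotone_id.add_const a)).intervalIntegrable
      (hg.comp (monotone_id.add_const b)).intervalIntegrable fun u _ => hg (by linarith)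
  · calc g c = ∫ _ in c..c + 1, g c := by simp
      _ ≤ ∫ u in c..c + 1, g u := intervalIntegral.integral_mono_on (by linarith)
          intervalIntegrable_const (hint _ _) fun u hu => hg hu.1

lemma ClassKL.exists_ge_add_delay {σ : ℝ → ℝ → ℝ} (hσ : ClassKL σ) {L : ℝ → ℝ}
    (hL : Monotone L) (hL0 : ∀ s, 0 ≤ L s) {κ : ℝ} (hκ : 0 ≤ κ) (r : ℝ) :
    ∃ B : ℝ → ℝ → ℝ, ClassKL B ∧ ∀ s t, 0 ≤ s → 0 ≤ t →
      σ s t + κ * (L (σ s 0) * σ s (max (t - r) 0)) + (if t < r then s else 0) ≤ B s t := by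
  obtain ⟨D, hDc, hDm, hLD⟩ := Monotone.exists_continuous_monotone_ge (g := fun u =>
    L (σ (max u 0) 0)) fun a b hab => hL <| hσ.monotoneOn le_rfl (le_max_right a 0)
      (le_max_right b 0) (max_le_max hab le_rfl)
  have hD0 : ∀ s, 0 ≤ D s := fun s => (hL0 _).trans (hLD s)
  refine ⟨_, hσ.add_isWeakKL (((hσ.isWeakKL.comp_delay r).mul_left (D := fun s => κ * D s)
    (continuous_const.mul hDc).continuousOn (fun a _ b _ hab => mul_le_mul_of_nonneg_left
      (hDm hab) hκ) fun s _ => mul_nonneg hκ (hD0 s)).add (isWeakKL_ite_lt r)),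
    fun s t hs ht => ?_⟩
  have hLs : L (σ s 0) ≤ D s := by simpa [max_eq_left hs] using hLD s
  have hdelay := hσ.nonneg hs (le_max_right (t - r) 0)
  have : κ * (L (σ s 0) * σ s (max (t - r) 0)) ≤ κ * D s * σ s (max (t - r) 0) := by
    rw [← mul_assoc]; gcongr
  linarith

lemma eLpNorm_comp_const_add_Ioo {E : Type*} [NormedAddCommGroup E] (g : ℝ → E)
    (hg : AEStronglyMeasurable g volume) (p : ℝ≥0∞) (t a b : ℝ) :
    eLpNorm (fun s => g (t + s)) p (volume.restrict (Ioo a b)) =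
      eLpNorm g p (volume.restrict (Ioo (t + a) (t + b))) := by
  have hpre : (fun s => t + s) ⁻¹' Ioo (t + a) (t + b) = Ioo a b := by
    simp [preimage_const_add_Ioo]
  have hmp := (measurePreserving_add_left volume t).restrict_preimage
    (measurableSet_Ioo (a := t + a) (b := t + b))
  rw [hpre] at hmp
  exact eLpNorm_comp_measurePreserving hg.restrict hmp

/-- Before time `-t` the segment `x_t` still sees the initial history; after it, `deriv x` is
bounded by `M`. -/
lemma eLpNorm_deriv_seg_le {r : ℝ} (hr : 0 ≤ r) {p : ℝ≥0∞} (hp : 1 ≤ p) {x0 x : ℝ → Vec n}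
    (hx : EqOn x x0 (Icc (-r) 0)) {t M : ℝ} (ht : 0 ≤ t)
    (hM : ∀ u, 0 < u → t - r < u → ‖deriv x u‖ ≤ M) :
    eLpNorm (deriv (seg r x t)) p (volume.restrict (Ioo (-r) 0)) ≤
      eLpNorm (deriv x0) p (volume.restrict (Ioo (t - r) 0)) +
        ENNReal.ofReal r ^ p.toReal⁻¹ * ENNReal.ofReal M := by
  set μ := volume.restrict (Ioo (-r) (0 : ℝ))
  set A := (Ioo (-r) (-t)).indicator fun s => deriv x0 (t + s)
  have hA : AEStronglyMeasurable A μ :=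
    ((measurable_deriv x0).comp (measurable_const_add t)).indicator measurableSet_Ioo
      |>.aestronglyMeasurable
  have hderiv : ∀ s, deriv (seg r x t) s = deriv x (t + s) := deriv_comp_const_add x t
  have hM0 : 0 ≤ M := (norm_nonneg _).trans (hM (t + 1) (by linarith) (by linarith))
  have hpt : ∀ᵐ s ∂μ, ‖deriv (seg r x t) s‖ ≤ ‖‖A s‖ + M‖ := by
    filter_upwards [ae_restrict_mem measurableSet_Ioo,
      ae_restrict_of_ae (compl_mem_ae_iff.2 (measure_singleton (-t)))] with s hs hst
    rcases (Ne.lt_or_gt hst : s < -t ∨ -t < s) with hlt | hgt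
    · have hxx0 : deriv x (t + s) = deriv x0 (t + s) :=
        Filter.EventuallyEq.deriv_eq <| hx.eventuallyEq_of_mem <|
          Icc_mem_nhds (by linarith [hs.1]) (by linarith)
      have hAs : A s = deriv x0 (t + s) :=
        indicator_of_mem (show s ∈ Ioo (-r) (-t) from ⟨hs.1, hlt⟩) _
      rw [hderiv, hxx0, hAs, Real.norm_of_nonneg (by positivity)]
      linarith
    · rw [hderiv, Real.norm_of_nonneg (by positivity)]
      linarith [hM (t + s) (by linarith) (by linarith [hs.1]), norm_nonneg (A s)]
  calc eLpNorm (deriv (seg r x t)) p μ ≤ eLpNorm (fun s => ‖A s‖ + M) p μ := eLpNorm_mono_ae hpt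
    _ ≤ eLpNorm (fun s => ‖A s‖) p μ + eLpNorm (fun _ => M) p μ :=
        eLpNorm_add_le hA.norm aestronglyMeasurable_const hp
    _ ≤ _ := by
        gcongr
        · rw [eLpNorm_norm, eLpNorm_indicator_eq_eLpNorm_restrict measurableSet_Ioo,
            Measure.restrict_restrict measurableSet_Ioo,
            inter_eq_self_of_subset_left (Ioo_subset_Ioo_right (by linarith)),
            eLpNorm_comp_const_add_Ioo _ (measurable_deriv x0).aestronglyMeasurable]
          rw [← sub_eq_add_neg, add_neg_cancel]
        · refine (eLpNorm_le_of_ae_bound (Eventually.of_forall fun _ =>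
            (Real.norm_of_nonneg hM0).le)).trans_eq ?_
          rw [Measure.restrict_apply_univ, Real.volume_Ioo, zero_sub, neg_neg]

lemma sobNorm_seg_le {r : ℝ} (hr : 0 ≤ r) {p : ℝ≥0∞} (hp : 1 ≤ p) {f : (ℝ → Vec n) → Vec n}
    {L : ℝ → ℝ} (hf : GoodRHS r f L) {x0 x : ℝ → Vec n} (hx0 : MemW r p x0)
    (hsol : IsSol r f x0 x ⊤) {t S M : ℝ} (ht : 0 ≤ t) (hS : supN r (seg r x t) ≤ S)
    (hM : ∀ u, max (t - r) 0 ≤ u → ‖f (seg r x u)‖ ≤ M) :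
    sobNorm r p (seg r x t) ≤ S + r ^ p.toReal⁻¹ * M + if t < r then sobNorm r p x0 else 0 := by
  have hM0 : 0 ≤ M := (norm_nonneg _).trans (hM _ le_rfl)
  set Einit := eLpNorm (deriv x0) p (volume.restrict (Ioo (t - r) 0))
  have hEinit_le : Einit ≤ eLpNorm (deriv x0) p (volume.restrict (Ioo (-r) 0)) :=
    eLpNorm_mono_measure _ (Measure.restrict_mono (Ioo_subset_Ioo_left (by linarith)) le_rfl)
  have hEinit_ne_top : Einit ≠ ⊤ := (hEinit_le.trans_lt hx0.eLpNorm_deriv_lt_top).ne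
  have hEinit : Einit.toReal ≤ if t < r then sobNorm r p x0 else 0 := by
    split_ifs with htr
    · exact (ENNReal.toReal_mono hx0.eLpNorm_deriv_lt_top.ne hEinit_le).trans
        (le_add_of_nonneg_left (supN_nonneg r x0))
    · simp [Einit, Ioo_eq_empty (by linarith : ¬t - r < 0)]
  have hconst : (ENNReal.ofReal r ^ p.toReal⁻¹ * ENNReal.ofReal M).toReal = r ^ p.toReal⁻¹ * M := by
    rw [ENNReal.toReal_mul, ← ENNReal.toReal_rpow, ENNReal.toReal_ofReal hr,
      ENNReal.toReal_ofReal hM0]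
  have hderiv := eLpNorm_deriv_seg_le hr hp hsol.eqOn ht (M := M) fun u hu htu =>
    (hsol.hasDerivAt hf hu).deriv ▸ hM u (max_le htu.le hu.le)
  have hT := ENNReal.toReal_mono (ENNReal.add_ne_top.2 ⟨hEinit_ne_top, by finiteness⟩) hderiv
  rw [ENNReal.toReal_add hEinit_ne_top (by finiteness), hconst] at hT
  change supN r (seg r x t) + _ ≤ _
  linarith

lemma le_rpow_one_sub_mul_rpow {w R α : ℝ} (hw : 0 ≤ w) (hwR : w ≤ R) (hα : α ≤ 1) :
    w ≤ R ^ (1 - α) * w ^ α := by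
  rcases hw.eq_or_lt with rfl | hw
  · exact mul_nonneg (Real.rpow_nonneg hwR _) (Real.rpow_nonneg le_rfl _)
  calc w = w ^ (1 - α) * w ^ α := by rw [← Real.rpow_add hw, sub_add_cancel, Real.rpow_one]
    _ ≤ R ^ (1 - α) * w ^ α := by gcongr

lemma norm_sub_le_add_mul_rpow {E : Type*} [SeminormedAddCommGroup E] {g : ℝ → E}
    {a m b A B α : ℝ} (ham : a ≤ m) (hmb : m ≤ b) (hα : 0 ≤ α) (hA : 0 ≤ A) (hB : 0 ≤ B)
    (h₁ : ‖g m - g a‖ ≤ A * (m - a) ^ α) (h₂ : ‖g b - g m‖ ≤ B * (b - m) ^ α) :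
    ‖g b - g a‖ ≤ (A + B) * (b - a) ^ α := by
  calc ‖g b - g a‖ ≤ ‖g m - g a‖ + ‖g b - g m‖ := by
        rw [add_comm]; exact norm_sub_le_norm_sub_add_norm_sub _ _ _
    _ ≤ A * (b - a) ^ α + B * (b - a) ^ α :=
        add_le_add (h₁.trans (by gcongr)) (h₂.trans (by gcongr))
    _ = (A + B) * (b - a) ^ α := by ring

lemma norm_sub_le_of_split_at_zero {E : Type*} [SeminormedAddCommGroup E] {x : ℝ → E}
    {r t c A α : ℝ} (ht : 0 ≤ t) (hα : 0 ≤ α) (hc : 0 ≤ c) (hA : 0 ≤ A)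
    (hinit : ∀ a b, -r ≤ a → a < b → b ≤ 0 → ‖x b - x a‖ ≤ c * (b - a) ^ α)
    (hlate : ∀ a b, max (t - r) 0 ≤ a → a ≤ b → b - a ≤ r → ‖x b - x a‖ ≤ A * (b - a) ^ α)
    {u v : ℝ} (hu : u ∈ Icc (-r) 0) (hv : v ∈ Icc (-r) 0) (hvu : v < u) :
    ‖x (t + u) - x (t + v)‖ ≤ (A + if t < r then c else 0) * (u - v) ^ α := by
  have hlen : t + u - (t + v) = u - v := by ring
  have hite : 0 ≤ if t < r then c else 0 := by split_ifs <;> simp [hc]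
  rcases le_or_gt (t + u) 0 with hu0 | hu0
  · refine (hinit _ _ (by linarith [hv.1]) (by linarith) hu0).trans ?_
    rw [hlen, if_pos (by linarith [hv.1])]
    gcongr
    linarith
  rcases le_or_gt 0 (t + v) with hv0 | hv0
  · refine (hlate _ _ (max_le (by linarith [hv.1]) hv0) (by linarith)
      (by linarith [hu.2, hv.1])).trans ?_
    rw [hlen]
    gcongr
    linarith
  have hsplit := norm_sub_le_add_mul_rpow (g := x) hv0.le hu0.le hα hc hA
    (hinit _ _ (by linarith [hv.1]) hv0 le_rfl)
    (hlate 0 (t + u) (max_le (by linarith [hv.1]) le_rfl) hu0.le (by linarith [hu.2, hv.1]))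
  rwa [if_pos (show t < r by linarith [hv.1]), add_comm A c, ← hlen]

lemma holderNorm_seg_le {r α : ℝ} (hr : 0 ≤ r) (hα0 : 0 ≤ α) (hα1 : α ≤ 1)
    {f : (ℝ → Vec n) → Vec n} {L : ℝ → ℝ} (hf : GoodRHS r f L) {x0 x : ℝ → Vec n}
    (hx0 : MemHol r α x0) (hsol : IsSol r f x0 x ⊤) {t S M : ℝ} (ht : 0 ≤ t)
    (hS : supN r (seg r x t) ≤ S) (hM : ∀ u, max (t - r) 0 ≤ u → ‖f (seg r x u)‖ ≤ M) :
    holderNorm r α (seg r x t) ≤ S + r ^ (1 - α) * M +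
      if t < r then holderNorm r α x0 else 0 := by
  set c := holderNorm r α x0
  have hM0 : 0 ≤ M := (norm_nonneg _).trans (hM _ le_rfl)
  have hc0 : 0 ≤ c := (supN_nonneg r x0).trans (le_max_left _ _)
  have hinit : ∀ a b, -r ≤ a → a < b → b ≤ 0 → ‖x b - x a‖ ≤ c * (b - a) ^ α := by
    intro a b ha hab hb
    have hbmem : b ∈ Icc (-r) 0 := ⟨ha.trans hab.le, hb⟩
    have hamem : a ∈ Icc (-r) 0 := ⟨ha, hab.le.trans hb⟩
    rw [hsol.eqOn hbmem, hsol.eqOn hamem, ← abs_of_pos (sub_pos.2 hab)]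
    exact norm_sub_le_holderNorm_mul hx0 hbmem hamem hab.ne'
  have hlate : ∀ a b, max (t - r) 0 ≤ a → a ≤ b → b - a ≤ r →
      ‖x b - x a‖ ≤ r ^ (1 - α) * M * (b - a) ^ α := by
    intro a b ha hab hbr
    calc ‖x b - x a‖ ≤ M * (b - a) := hsol.norm_sub_le hf ((le_max_right _ _).trans ha) hab
          fun u hu => hM u (ha.trans hu.1)
      _ ≤ M * (r ^ (1 - α) * (b - a) ^ α) := by
          gcongr; exact le_rpow_one_sub_mul_rpow (by linarith) hbr hα1
      _ = r ^ (1 - α) * M * (b - a) ^ α := by ring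
  have hrM : 0 ≤ r ^ (1 - α) * M := mul_nonneg (Real.rpow_nonneg hr _) hM0
  have hite : 0 ≤ if t < r then c else 0 := by split_ifs <;> simp [hc0]
  have hS0 : 0 ≤ S := (supN_nonneg _ _).trans hS
  rw [add_assoc]
  refine holderNorm_le (by positivity) (by linarith) fun u hu v hv hvu =>
    (norm_sub_le_of_split_at_zero ht hα0 hc0 hrM hinit hlate hu hv hvu).trans
      (mul_le_mul_of_nonneg_right (le_add_of_nonneg_left hS0)
        (Real.rpow_nonneg (sub_nonneg.2 hvu.le) _))

lemma GoodRHS.norm_comp_seg_le_of_KL_bound {r : ℝ} {f : (ℝ → Vec n) → Vec n} {L : ℝ → ℝ}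
    (hf : GoodRHS r f L) {σ : ℝ → ℝ → ℝ} (hσ : ClassKL σ) {x : ℝ → Vec n}
    (hx : ContinuousOn x (Ici (-r))) {c : ℝ} (hc : 0 ≤ c)
    (hbound : ∀ s, 0 ≤ s → supN r (seg r x s) ≤ σ c s) {m u : ℝ} (hm : 0 ≤ m) (hmu : m ≤ u) :
    ‖f (seg r x u)‖ ≤ L (σ c 0) * σ c m := by
  have hu : 0 ≤ u := hm.trans hmu
  calc ‖f (seg r x u)‖ ≤ L (σ c 0) * supN r (seg r x u) :=
        hf.norm_le (memC0_seg hx hu) (hσ.nonneg hc le_rfl)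
          ((hbound u hu).trans (hσ.antitoneOn hc self_mem_Ici hu hu))
    _ ≤ L (σ c 0) * σ c m := by
        gcongr
        · exact hf.nonneg _
        · exact (hbound u hu).trans (hσ.antitoneOn hc hm hu hmu)

lemma hexp_nonneg {p : ℝ≥0∞} (hp : 1 ≤ p) : 0 ≤ hexp p := by
  rcases eq_or_ne p ⊤ with rfl | hp'
  · simp [hexp]
  · have : 1 ≤ p.toReal := by simpa using ENNReal.toReal_mono hp' hp
    simpa [hexp] using inv_le_one_of_one_le₀ this

lemma hexp_le_one (p : ℝ≥0∞) : hexp p ≤ 1 := by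
  simp [hexp]

lemma one_sub_hexp (p : ℝ≥0∞) : 1 - hexp p = p.toReal⁻¹ := by
  simp [hexp]

def IsSobolevOrHolder (r : ℝ) (p : ℝ≥0∞) (MemX : (ℝ → Vec n) → Prop)
    (NormX : (ℝ → Vec n) → ℝ) : Prop :=
  (MemX = MemW r p ∧ NormX = sobNorm r p) ∨
    (MemX = MemHol r (hexp p) ∧ NormX = holderNorm r (hexp p))

namespace IsSobolevOrHolder

variable {r : ℝ} {p : ℝ≥0∞} {MemX : (ℝ → Vec n) → Prop} {NormX : (ℝ → Vec n) → ℝ}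

lemma memC0 (hX : IsSobolevOrHolder r p MemX NormX) {g : ℝ → Vec n} (hg : MemX g) :
    MemC0 r g := by
  rcases hX with ⟨rfl, -⟩ | ⟨rfl, -⟩
  exacts [hg.memC0, hg.1]

lemma supN_le (hX : IsSobolevOrHolder r p MemX NormX) (g : ℝ → Vec n) : supN r g ≤ NormX g := by
  rcases hX with ⟨-, rfl⟩ | ⟨-, rfl⟩
  exacts [supN_le_sobNorm r p g, le_max_left _ _]

lemma norm_seg_le (hX : IsSobolevOrHolder r p MemX NormX) (hr : 0 ≤ r) (hp : 1 ≤ p)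
    {f : (ℝ → Vec n) → Vec n} {L : ℝ → ℝ} (hf : GoodRHS r f L) {x0 x : ℝ → Vec n}
    (hx0 : MemX x0) (hsol : IsSol r f x0 x ⊤) {t S M : ℝ} (ht : 0 ≤ t)
    (hS : supN r (seg r x t) ≤ S) (hM : ∀ u, max (t - r) 0 ≤ u → ‖f (seg r x u)‖ ≤ M) :
    NormX (seg r x t) ≤ S + r ^ p.toReal⁻¹ * M + if t < r then NormX x0 else 0 := by
  rcases hX with ⟨rfl, rfl⟩ | ⟨rfl, rfl⟩
  · exact sobNorm_seg_le hr hp hf hx0 hsol ht hS hM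
  · simpa only [one_sub_hexp] using
      holderNorm_seg_le hr (hexp_nonneg hp) (hexp_le_one p) hf hx0 hsol ht hS hM

end IsSobolevOrHolder

theorem stmt4_general (n : ℕ) (r : ℝ) (hr : 0 < r)
    (f : (ℝ → Vec n) → Vec n) (L : ℝ → ℝ) (hf : GoodRHS r f L)
    (p : ℝ≥0∞) (hp : 1 < p)
    (MemX : (ℝ → Vec n) → Prop) (NormX : (ℝ → Vec n) → ℝ)
    (hX : (MemX = MemW r p ∧ NormX = sobNorm r p) ∨
          (MemX = MemHol r (hexp p) ∧ NormX = holderNorm r (hexp p))) :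
    ((∃ σ : ℝ → ℝ → ℝ, ClassKL σ ∧ ∀ x0 x : ℝ → Vec n, MemC0 r x0 →
        IsSol r f x0 x ⊤ → ∀ t : ℝ, 0 ≤ t → supN r (seg r x t) ≤ σ (supN r x0) t) →
      (∃ σ : ℝ → ℝ → ℝ, ClassKL σ ∧ ∀ x0 x : ℝ → Vec n, MemX x0 →
        IsSol r f x0 x ⊤ → ∀ t : ℝ, 0 ≤ t → supN r (seg r x t) ≤ σ (NormX x0) t)) ∧
    ((∃ σ : ℝ → ℝ → ℝ, ClassKL σ ∧ ∀ x0 x : ℝ → Vec n, MemX x0 →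
        IsSol r f x0 x ⊤ → ∀ t : ℝ, 0 ≤ t → supN r (seg r x t) ≤ σ (NormX x0) t)
      ↔
     (∃ σ : ℝ → ℝ → ℝ, ClassKL σ ∧ ∀ x0 x : ℝ → Vec n, MemX x0 →
        IsSol r f x0 x ⊤ → ∀ t : ℝ, 0 ≤ t → NormX (seg r x t) ≤ σ (NormX x0) t)) := by
  have hX' : IsSobolevOrHolder r p MemX NormX := hX
  have hc : ∀ x0, 0 ≤ NormX x0 := fun x0 => (supN_nonneg r x0).trans (hX'.supN_le x0)
  refine ⟨fun ⟨σ, hσ, H⟩ => ⟨σ, hσ, fun x0 x hx0 hsol t ht => ?_⟩, fun ⟨σ, hσ, H⟩ => ?_,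
    fun ⟨σ, hσ, H⟩ => ⟨σ, hσ, fun x0 x hx0 hsol t ht =>
      (hX'.supN_le _).trans (H x0 x hx0 hsol t ht)⟩⟩
  · exact (H x0 x (hX'.memC0 hx0) hsol t ht).trans
      (hσ.monotoneOn ht (supN_nonneg r x0) (hc x0) (hX'.supN_le x0))
  obtain ⟨B, hB, hσB⟩ := hσ.exists_ge_add_delay hf.monotone hf.nonneg
    (Real.rpow_nonneg hr.le p.toReal⁻¹) r
  refine ⟨B, hB, fun x0 x hx0 hsol t ht => ?_⟩
  refine (hX'.norm_seg_le hr.le hp.le hf hx0 hsol ht (H x0 x hx0 hsol t ht) fun u hu => ?_).trans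
    (hσB _ _ (hc x0) ht)
  exact hf.norm_comp_seg_le_of_KL_bound hσ hsol.continuousOn (hc x0) (H x0 x hx0 hsol)
    (le_max_right _ _) hu

/-- For a forward-complete system on `C⁰` and `X = W^{1,p}` or
`X = C^{0,1-1/p}` (`p ∈ (1,∞]`): (UGAS) ⇒ (Q-X), and (Q-X) ↔ (UGAS-X). -/
theorem stmt4 (n : ℕ) (hn : 1 ≤ n) (r : ℝ) (hr : 0 < r)
    (f : (ℝ → Vec n) → Vec n) (L : ℝ → ℝ) (hf : GoodRHS r f L)
    (p : ℝ≥0∞) (hp : 1 < p)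
    (hFC : ∀ x0 : ℝ → Vec n, MemC0 r x0 → ∃ x : ℝ → Vec n, IsSol r f x0 x ⊤)
    (MemX : (ℝ → Vec n) → Prop) (NormX : (ℝ → Vec n) → ℝ)
    (hX : (MemX = MemW r p ∧ NormX = sobNorm r p) ∨
          (MemX = MemHol r (hexp p) ∧ NormX = holderNorm r (hexp p))) :
    ((∃ σ : ℝ → ℝ → ℝ, ClassKL σ ∧ ∀ x0 x : ℝ → Vec n, MemC0 r x0 →
        IsSol r f x0 x ⊤ → ∀ t : ℝ, 0 ≤ t → supN r (seg r x t) ≤ σ (supN r x0) t) →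
      (∃ σ : ℝ → ℝ → ℝ, ClassKL σ ∧ ∀ x0 x : ℝ → Vec n, MemX x0 →
        IsSol r f x0 x ⊤ → ∀ t : ℝ, 0 ≤ t → supN r (seg r x t) ≤ σ (NormX x0) t)) ∧
    ((∃ σ : ℝ → ℝ → ℝ, ClassKL σ ∧ ∀ x0 x : ℝ → Vec n, MemX x0 →
        IsSol r f x0 x ⊤ → ∀ t : ℝ, 0 ≤ t → supN r (seg r x t) ≤ σ (NormX x0) t)
      ↔
     (∃ σ : ℝ → ℝ → ℝ, ClassKL σ ∧ ∀ x0 x : ℝ → Vec n, MemX x0 →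
        IsSol r f x0 x ⊤ → ∀ t : ℝ, 0 ≤ t → NormX (seg r x t) ≤ σ (NormX x0) t)) :=
  stmt4_general n r hr f L hf p hp MemX NormX hX
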